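/- arXiv:1607.05100 — 2 statements merged into one kernel-verified Lean document; each statement's English description precedes it below -/
import Mathlib

section
/- Let f ∈ L¹(ℝ²,ℍ) and ε > 0. Then for every (x₁,x₂) ∈ ℝ², (f ∗ p_ε)(x₁,x₂) = (1/(2π)) ∫_{ℝ²} P(εω₁, εω₂) (ℱ_r f)(ω₁,ω₂) e^{j ω₂ x₂} e^{i ω₁ x₁} dω₁ dω₂. -/
open MeasureTheory Real ENNReal

noncomputable section

/-- The real quaternions. -/
abbrev Hq := Quaternion ℝ

/-- The imaginary unit `i`. -/
def qi : Hq := ⟨0,1,0,0⟩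
/-- The imaginary unit `j`. -/
def qj : Hq := ⟨0,0,1,0⟩
/-- The imaginary unit `k`. -/
def qk : Hq := ⟨0,0,0,1⟩

/-- For a (unit pure imaginary) quaternion `u`, `e^{uθ} := cos θ + u sin θ`. -/
def qexp (u : Hq) (θ : ℝ) : Hq := (Real.cos θ) • (1 : Hq) + (Real.sin θ) • u

/-- The right-sided quaternion Fourier transform of `f ∈ L¹(ℝ²,ℍ)`. -/
def Fr (f : ℝ × ℝ → Hq) (ω : ℝ × ℝ) : Hq :=
  (1 / (2 * Real.pi)) • ∫ x : ℝ × ℝ, f x * qexp qi (-(ω.1 * x.1)) * qexp qj (-(ω.2 * x.2))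

/-- The two-sided quaternion Fourier transform of `f ∈ L¹(ℝ²,ℍ)`. -/
def Fs (f : ℝ × ℝ → Hq) (ω : ℝ × ℝ) : Hq :=
  (1 / (2 * Real.pi)) • ∫ x : ℝ × ℝ, qexp qi (-(ω.1 * x.1)) * f x * qexp qj (-(ω.2 * x.2))


/-- The 2D Poisson kernel. -/
def poisson (eps : ℝ) (x : ℝ × ℝ) : ℝ :=
  (1 / Real.pi ^ 2) * (eps ^ 2 / ((eps ^ 2 + x.1 ^ 2) * (eps ^ 2 + x.2 ^ 2)))

/-- The kernel P, with P (a, b) = exp (-|a| - |b|). -/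
def Pker (a b : ℝ) : ℝ := Real.exp (-|a| - |b|)

/-!
Substituting the definition of `ℱ_r f` and exchanging the order of integration (the integrand
is dominated by `P(εω) |f(y)|`), it remains to integrate, for fixed `y`,
`P(εω) e^{-iω₁y₁} e^{jω₂(x₂-y₂)} e^{iω₁x₁}` over `ω`. The `ω₂`-integral of
`e^{-ε|ω₂|} e^{jω₂t}` is the real number `2ε/(ε² + t²)`, which is central in `ℍ`; once it is
pulled out, the two `i`-exponentials merge and the `ω₁`-integral gives the second factor of the
Poisson kernel. Each of these one-dimensional integrals is the image of
`∫ e^{-ε|ω|} e^{iωt} dω = 2ε/(ε² + t²)` under the `ℝ`-algebra map `ℂ → ℍ` sending `I` to the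
relevant imaginary unit.
-/

open Set Complex

section QuaternionExp

variable {u : Hq}

theorem qexp_zero (u : Hq) : qexp u 0 = 1 := by simp [qexp]

@[fun_prop]
theorem continuous_qexp (u : Hq) : Continuous (qexp u) := by
  unfold qexp; fun_prop

theorem qexp_eq_liftAux (hu : u * u = -1) (θ : ℝ) :
    qexp u θ = liftAux u hu (cexp (θ * I)) := by
  rw [liftAux_apply, exp_ofReal_mul_I_re, exp_ofReal_mul_I_im, qexp,
    Algebra.algebraMap_eq_smul_one]

theorem qexp_add (hu : u * u = -1) (a b : ℝ) : qexp u (a + b) = qexp u a * qexp u b := by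
  rw [qexp_eq_liftAux hu, qexp_eq_liftAux hu, qexp_eq_liftAux hu, ← map_mul, ← Complex.exp_add]
  push_cast
  ring_nf

theorem star_qexp (hu : star u = -u) (θ : ℝ) : star (qexp u θ) = qexp u (-θ) := by
  simp [qexp, hu]

theorem norm_qexp (hu : u * u = -1) (hu' : star u = -u) (θ : ℝ) : ‖qexp u θ‖ = 1 := by
  refine (pow_eq_one_iff_of_nonneg (norm_nonneg _) two_ne_zero).1 ?_
  rw [sq, ← CStarRing.norm_self_mul_star, star_qexp hu', ← qexp_add hu, add_neg_cancel,
    qexp_zero, norm_one]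

open Quaternion in
theorem qi_mul_qi : qi * qi = -1 := by
  ext <;> simp only [re_mul, imI_mul, imJ_mul, imK_mul] <;> simp [qi]

open Quaternion in
theorem qj_mul_qj : qj * qj = -1 := by
  ext <;> simp only [re_mul, imI_mul, imJ_mul, imK_mul] <;> simp [qj]

theorem star_qi : star qi = -qi := Quaternion.star_eq_neg.2 rfl

theorem star_qj : star qj = -qj := Quaternion.star_eq_neg.2 rfl

theorem norm_qexp_qi (θ : ℝ) : ‖qexp qi θ‖ = 1 := norm_qexp qi_mul_qi star_qi θ

theorem norm_qexp_qj (θ : ℝ) : ‖qexp qj θ‖ = 1 := norm_qexp qj_mul_qj star_qj θ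

end QuaternionExp

section ExpNegAbs

variable {ε : ℝ} (t : ℝ)

theorem exp_neg_abs_smul_cexp_of_nonneg (hε : 0 ≤ ε) {ω : ℝ} (hω : 0 ≤ ω) :
    Real.exp (-|ε * ω|) • cexp (↑(ω * t) * I) = cexp ((-ε + t * I) * ω) := by
  rw [abs_of_nonneg (mul_nonneg hε hω), real_smul, ofReal_exp, ← Complex.exp_add]
  push_cast
  ring_nf

theorem exp_neg_abs_smul_cexp_of_nonpos (hε : 0 ≤ ε) {ω : ℝ} (hω : ω ≤ 0) :
    Real.exp (-|ε * ω|) • cexp (↑(ω * t) * I) = cexp ((ε + t * I) * ω) := by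
  rw [abs_of_nonpos (mul_nonpos_of_nonneg_of_nonpos hε hω), real_smul, ofReal_exp,
    ← Complex.exp_add]
  push_cast
  ring_nf

theorem integrableOn_exp_neg_abs_smul_cexp_Ioi (hε : 0 < ε) :
    IntegrableOn (fun ω : ℝ => Real.exp (-|ε * ω|) • cexp (↑(ω * t) * I)) (Ioi 0) :=
  (integrableOn_exp_mul_complex_Ioi (a := -ε + t * I) (by simpa using hε) 0).congr_fun
    (fun _ hω => (exp_neg_abs_smul_cexp_of_nonneg t hε.le (le_of_lt hω)).symm) measurableSet_Ioi

theorem integrableOn_exp_neg_abs_smul_cexp_Iic (hε : 0 < ε) :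
    IntegrableOn (fun ω : ℝ => Real.exp (-|ε * ω|) • cexp (↑(ω * t) * I)) (Iic 0) :=
  (integrableOn_exp_mul_complex_Iic (a := ε + t * I) (by simpa using hε) 0).congr_fun
    (fun _ hω => (exp_neg_abs_smul_cexp_of_nonpos t hε.le hω).symm) measurableSet_Iic

theorem integrable_exp_neg_abs_smul_cexp (hε : 0 < ε) :
    Integrable (fun ω : ℝ => Real.exp (-|ε * ω|) • cexp (↑(ω * t) * I)) := by
  rw [← integrableOn_univ, ← Iic_union_Ioi (a := 0)]
  exact (integrableOn_exp_neg_abs_smul_cexp_Iic t hε).union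
    (integrableOn_exp_neg_abs_smul_cexp_Ioi t hε)

theorem integral_exp_neg_abs_smul_cexp (hε : 0 < ε) :
    ∫ ω : ℝ, Real.exp (-|ε * ω|) • cexp (↑(ω * t) * I) = ((2 * ε / (ε ^ 2 + t ^ 2) : ℝ) : ℂ) := by
  rw [← intervalIntegral.integral_Iic_add_Ioi (integrableOn_exp_neg_abs_smul_cexp_Iic t hε)
      (integrableOn_exp_neg_abs_smul_cexp_Ioi t hε),
    setIntegral_congr_fun measurableSet_Iic fun _ hω => exp_neg_abs_smul_cexp_of_nonpos t hε.le hω,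
    setIntegral_congr_fun measurableSet_Ioi
      fun _ hω => exp_neg_abs_smul_cexp_of_nonneg t hε.le (le_of_lt hω),
    integral_exp_mul_complex_Iic (by simpa using hε),
    integral_exp_mul_complex_Ioi (by simpa using hε)]
  have h₁ : (ε : ℂ) + t * I ≠ 0 := fun h => by simpa [hε.ne'] using congrArg re h
  have h₂ : -(ε : ℂ) + t * I ≠ 0 := fun h => by simpa [hε.ne'] using congrArg re h
  have h₃ : (ε : ℂ) ^ 2 + t ^ 2 ≠ 0 := by exact_mod_cast (by positivity : ε ^ 2 + t ^ 2 ≠ 0)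
  simp only [Complex.ofReal_zero, mul_zero, Complex.exp_zero]
  push_cast
  field_simp
  linear_combination (-2 * ε * t ^ 2 : ℂ) * I_sq

theorem integrable_exp_neg_abs (hε : 0 < ε) : Integrable (fun ω : ℝ => Real.exp (-|ε * ω|)) := by
  simpa [Complex.norm_exp] using (integrable_exp_neg_abs_smul_cexp 0 hε).norm

end ExpNegAbs

section QuaternionIntegral

variable {u : Hq} {ε : ℝ}

theorem smul_qexp_eq_liftAux (hu : u * u = -1) (r θ : ℝ) :
    r • qexp u θ = liftAux u hu (r • cexp (θ * I)) := by
  rw [map_smul, qexp_eq_liftAux hu]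

theorem integrable_exp_neg_abs_smul_qexp (hu : u * u = -1) (hε : 0 < ε) (t : ℝ) :
    Integrable (fun ω : ℝ => Real.exp (-|ε * ω|) • qexp u (ω * t)) := by
  simp only [smul_qexp_eq_liftAux hu]
  exact (liftAux u hu).toLinearMap.toContinuousLinearMap.integrable_comp
    (integrable_exp_neg_abs_smul_cexp t hε)

theorem integral_exp_neg_abs_smul_qexp (hu : u * u = -1) (hε : 0 < ε) (t : ℝ) :
    ∫ ω : ℝ, Real.exp (-|ε * ω|) • qexp u (ω * t) = algebraMap ℝ Hq (2 * ε / (ε ^ 2 + t ^ 2)) := by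
  simp only [smul_qexp_eq_liftAux hu]
  rw [← (liftAux u hu).commutes, coe_algebraMap, ← integral_exp_neg_abs_smul_cexp t hε]
  exact (liftAux u hu).toLinearMap.toContinuousLinearMap.integral_comp_comm
    (integrable_exp_neg_abs_smul_cexp t hε)

end QuaternionIntegral

theorem Pker_eq_mul (a b : ℝ) : Pker a b = Real.exp (-|a|) * Real.exp (-|b|) := by
  rw [Pker, sub_eq_add_neg, Real.exp_add]

theorem integrable_Pker {ε : ℝ} (hε : 0 < ε) :
    Integrable (fun ω : ℝ × ℝ => Pker (ε * ω.1) (ε * ω.2)) := by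
  simp_rw [Pker_eq_mul]
  rw [Measure.volume_eq_prod]
  exact (integrable_exp_neg_abs hε).mul_prod (integrable_exp_neg_abs hε)

theorem integral_Pker_smul_mul_qexp {ε : ℝ} (hε : 0 < ε) (c : Hq) (x y : ℝ × ℝ) :
    ∫ ω : ℝ × ℝ, (Pker (ε * ω.1) (ε * ω.2) • c) *
        (qexp qi (-(ω.1 * y.1)) * qexp qj (ω.2 * (x.2 - y.2)) * qexp qi (ω.1 * x.1))
      = ((2 * π) ^ 2 * poisson ε (x.1 - y.1, x.2 - y.2)) • c := by
  set E : ℝ → ℝ := fun a => Real.exp (-|ε * a|)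
  have hint : Integrable (fun ω : ℝ × ℝ => (Pker (ε * ω.1) (ε * ω.2) • c) *
      (qexp qi (-(ω.1 * y.1)) * qexp qj (ω.2 * (x.2 - y.2)) * qexp qi (ω.1 * x.1))) :=
    ((integrable_Pker hε).smul_const c).mul_bdd (c := 1)
      (Continuous.aestronglyMeasurable (by fun_prop))
      (ae_of_all _ fun ω => by simp [norm_qexp_qi, norm_qexp_qj])
  have hsplit : ∀ ω₁ ω₂ : ℝ, (Pker (ε * ω₁) (ε * ω₂) • c) *
      (qexp qi (-(ω₁ * y.1)) * qexp qj (ω₂ * (x.2 - y.2)) * qexp qi (ω₁ * x.1))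
      = (E ω₁ • (c * qexp qi (-(ω₁ * y.1)))) * (E ω₂ • qexp qj (ω₂ * (x.2 - y.2))) *
          qexp qi (ω₁ * x.1) := by
    intro ω₁ ω₂
    simp only [Pker_eq_mul, E, mul_smul, smul_mul_assoc, mul_smul_comm, mul_assoc]
    rw [smul_comm]
  have hinner : ∀ ω₁ : ℝ, ∫ ω₂ : ℝ, (E ω₁ • (c * qexp qi (-(ω₁ * y.1)))) *
      (E ω₂ • qexp qj (ω₂ * (x.2 - y.2))) * qexp qi (ω₁ * x.1)
      = (2 * ε / (ε ^ 2 + (x.2 - y.2) ^ 2)) • (c * (E ω₁ • qexp qi (ω₁ * (x.1 - y.1)))) := by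
    intro ω₁
    have hB := integrable_exp_neg_abs_smul_qexp qj_mul_qj hε (x.2 - y.2)
    rw [integral_mul_const_of_integrable (hB.const_mul _), integral_const_mul_of_integrable hB,
      integral_exp_neg_abs_smul_qexp qj_mul_qj hε, Algebra.algebraMap_eq_smul_one]
    simp only [smul_mul_assoc, mul_smul_comm, mul_one, mul_assoc, ← qexp_add qi_mul_qi]
    rw [show -(ω₁ * y.1) + ω₁ * x.1 = ω₁ * (x.1 - y.1) by ring]
  rw [Measure.volume_eq_prod, integral_prod _ hint]
  simp only [hsplit, hinner]
  rw [integral_smul, integral_const_mul_of_integrable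
      (integrable_exp_neg_abs_smul_qexp qi_mul_qi hε _),
    integral_exp_neg_abs_smul_qexp qi_mul_qi hε, Algebra.algebraMap_eq_smul_one, mul_smul_one,
    smul_smul, poisson]
  congr 1
  field_simp

theorem Fr_mul_eq_integral {f : ℝ × ℝ → Hq} (hf : Integrable f) (ω : ℝ × ℝ) (q : Hq) :
    Fr f ω * q = (1 / (2 * π)) •
      ∫ y : ℝ × ℝ, f y * (qexp qi (-(ω.1 * y.1)) * qexp qj (-(ω.2 * y.2)) * q) := by
  have h : Integrable fun y : ℝ × ℝ => f y * (qexp qi (-(ω.1 * y.1)) * qexp qj (-(ω.2 * y.2))) :=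
    hf.mul_bdd (c := 1) (Continuous.aestronglyMeasurable (by fun_prop))
      (ae_of_all _ fun y => by simp [norm_qexp_qi, norm_qexp_qj])
  simp only [Fr, smul_mul_assoc, mul_assoc] at h ⊢
  rw [← integral_mul_const_of_integrable h]
  simp only [mul_assoc]

theorem stmt0 (f : ℝ × ℝ → Hq) (hf : Integrable f) (eps : ℝ) (heps : 0 < eps) (x : ℝ × ℝ) :
    (∫ y : ℝ × ℝ, poisson eps (x.1 - y.1, x.2 - y.2) • f y) =
      (1 / (2 * Real.pi)) •
        ∫ ω : ℝ × ℝ, Pker (eps * ω.1) (eps * ω.2) •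
          (Fr f ω * qexp qj (ω.2 * x.2) * qexp qi (ω.1 * x.1)) := by
  set Q : ℝ × ℝ → ℝ × ℝ → Hq := fun ω y =>
    qexp qi (-(ω.1 * y.1)) * qexp qj (ω.2 * (x.2 - y.2)) * qexp qi (ω.1 * x.1)
  have hexpand : ∀ ω : ℝ × ℝ, Pker (eps * ω.1) (eps * ω.2) •
      (Fr f ω * qexp qj (ω.2 * x.2) * qexp qi (ω.1 * x.1))
      = (1 / (2 * π)) • ∫ y, (Pker (eps * ω.1) (eps * ω.2) • f y) * Q ω y := by
    intro ω
    rw [mul_assoc, Fr_mul_eq_integral hf, smul_comm, ← integral_smul]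
    refine congrArg _ (integral_congr_ae (ae_of_all _ fun y => ?_))
    dsimp only [Q]
    rw [smul_mul_assoc, show ω.2 * (x.2 - y.2) = -(ω.2 * y.2) + ω.2 * x.2 by ring,
      qexp_add qj_mul_qj]
    simp only [mul_assoc]
  have hint : Integrable
      (Function.uncurry fun ω y => (Pker (eps * ω.1) (eps * ω.2) • f y) * Q ω y)
      (volume.prod volume) :=
    ((integrable_Pker heps).smul_prod hf).mul_bdd (c := 1)
      (Continuous.aestronglyMeasurable (by fun_prop))
      (ae_of_all _ fun z => by simp [Q, norm_qexp_qi, norm_qexp_qj])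
  simp only [hexpand]
  rw [integral_smul, integral_integral_swap hint]
  simp only [Q, integral_Pker_smul_mul_qexp heps, mul_smul]
  rw [integral_smul, smul_smul, smul_smul,
    show 1 / (2 * π) * (1 / (2 * π)) * (2 * π) ^ 2 = 1 by field_simp, one_smul]
end
end

section
/- If f, g ∈ L²(ℝ²,ℍ), then Sc(⟨βf, βg⟩) = Sc(⟨f, g⟩) and Sc(i·⟨βf, βg⟩) = Sc(i·⟨f, g⟩). In particular ‖βf‖₂ = ‖f‖₂. -/
open MeasureTheory Real ENNReal

noncomputable section

/-- The transform beta. -/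
def betaT (f : ℝ × ℝ → Hq) (x : ℝ × ℝ) : Hq :=
  ⟨(f x).re, (f x).imI, (f (-x.1, x.2)).imJ, (f (-x.1, x.2)).imK⟩

/-!
Split `ℍ = ℂ ⊕ ℂj` with `ℂ = span{1, i}`: the two summands are orthogonal for the real inner
product `Sc(p conj(q))`, and both are stable under left multiplication by `i`. Since `βf` is the
`ℂ`-component of `f` plus the `ℂj`-component of `f ∘ σ`, `σ(x₁, x₂) = (-x₁, x₂)`, orthogonality
splits `Sc(βf conj(βg))` into the `ℂ`-part of `Sc(f conj(g))` plus its `ℂj`-part composed with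
`σ`, and `σ` preserves Lebesgue measure. As `β(i f) = i βf` and `Sc(i⟨f, g⟩) = Sc⟨i f, g⟩`, the
second identity is the first one for the pair `(i f, g)`; the norm identity is the case `g = f`.
-/

open scoped RealInnerProductSpace

section Integration

variable {α : Type*} [MeasurableSpace α] {μ : Measure α}

theorem MeasureTheory.MemLp.integrable_inner {𝕜 E : Type*} [RCLike 𝕜] [NormedAddCommGroup E]
    [InnerProductSpace 𝕜 E] {f g : α → E} (hf : MemLp f 2 μ) (hg : MemLp g 2 μ) :
    Integrable (fun x => inner 𝕜 (f x) (g x)) μ :=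
  (L2.integrable_inner (hf.toLp f) (hg.toLp g)).congr <| by
    filter_upwards [hf.coeFn_toLp, hg.coeFn_toLp] with x hfx hgx
    rw [hfx, hgx]

theorem MeasureTheory.MeasurePreserving.integral_add_comp {E : Type*} [NormedAddCommGroup E]
    [NormedSpace ℝ E] {σ : α ≃ᵐ α} (hσ : MeasurePreserving σ μ μ) {u v : α → E}
    (hu : Integrable u μ) (hv : Integrable v μ) :
    ∫ x, u x + v (σ x) ∂μ = ∫ x, u x + v x ∂μ := by
  have hvσ : Integrable (fun x => v (σ x)) μ :=
    (hσ.integrable_comp_emb σ.measurableEmbedding).2 hv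
  rw [integral_add hu hvσ, integral_add hu hv, hσ.integral_comp']

theorem Quaternion.re_integral {f : α → Hq} (hf : Integrable f μ) :
    (∫ x, f x ∂μ).re = ∫ x, (f x).re ∂μ := by
  simpa [Quaternion.inner_def] using (integral_inner (𝕜 := ℝ) hf (1 : Hq)).symm

theorem Quaternion.re_integral_mul_star {f g : α → Hq} (hf : MemLp f 2 μ) (hg : MemLp g 2 μ) :
    (∫ x, f x * star (g x) ∂μ).re = ∫ x, ⟪f x, g x⟫ ∂μ := by
  have hfg : Integrable (fun x => f x * star (g x)) μ := hf.integrable_mul hg.star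
  rw [Quaternion.re_integral hfg]
  simp only [Quaternion.inner_def]

theorem Quaternion.const_mul_integral_mul_star {f g : α → Hq} (hf : MemLp f 2 μ)
    (hg : MemLp g 2 μ) (c : Hq) :
    c * ∫ x, f x * star (g x) ∂μ = ∫ x, (c * f x) * star (g x) ∂μ := by
  simp_rw [mul_assoc]
  exact (integral_const_mul_of_integrable (hf.integrable_mul hg.star)).symm

end Integration

-- `Quaternion` is a `def`, so simp cannot read components off the literal `qi` at type `Hq`.
@[simp] theorem qi_re : qi.re = 0 := rfl
@[simp] theorem qi_imI : qi.imI = 1 := rfl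
@[simp] theorem qi_imJ : qi.imJ = 0 := rfl
@[simp] theorem qi_imK : qi.imK = 0 := rfl

def cplxProj : Hq →L[ℝ] Hq := LinearMap.toContinuousLinearMap
  ((QuaternionAlgebra.reₗ _ _ _).smulRight (1 : Hq) + (QuaternionAlgebra.imIₗ _ _ _).smulRight qi)

def jProj : Hq →L[ℝ] Hq := .id ℝ Hq - cplxProj

theorem cplxProj_apply (q : Hq) : cplxProj q = q.re • (1 : Hq) + q.imI • qi := rfl

@[simp] theorem cplxProj_re (q : Hq) : (cplxProj q).re = q.re := by
  simp [cplxProj_apply, Quaternion.re_one]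
@[simp] theorem cplxProj_imI (q : Hq) : (cplxProj q).imI = q.imI := by
  simp [cplxProj_apply, Quaternion.imI_one]
@[simp] theorem cplxProj_imJ (q : Hq) : (cplxProj q).imJ = 0 := by
  simp [cplxProj_apply, Quaternion.imJ_one]
@[simp] theorem cplxProj_imK (q : Hq) : (cplxProj q).imK = 0 := by
  simp [cplxProj_apply, Quaternion.imK_one]

@[simp] theorem jProj_re (q : Hq) : (jProj q).re = 0 := by simp [jProj]
@[simp] theorem jProj_imI (q : Hq) : (jProj q).imI = 0 := by simp [jProj]
@[simp] theorem jProj_imJ (q : Hq) : (jProj q).imJ = q.imJ := by simp [jProj]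
@[simp] theorem jProj_imK (q : Hq) : (jProj q).imK = q.imK := by simp [jProj]

theorem cplxProj_add_jProj (q : Hq) : cplxProj q + jProj q = q := by
  simp [jProj]

theorem inner_cplxProj_add_jProj (a b c d : Hq) :
    ⟪cplxProj a + jProj c, cplxProj b + jProj d⟫ =
      ⟪cplxProj a, cplxProj b⟫ + ⟪jProj c, jProj d⟫ := by
  simp [Quaternion.inner_def, Quaternion.re_mul]
  ring

theorem cplxProj_qi_mul (q : Hq) : cplxProj (qi * q) = qi * cplxProj q := by
  ext <;> simp [Quaternion.re_mul, Quaternion.imI_mul, Quaternion.imJ_mul, Quaternion.imK_mul]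

theorem jProj_qi_mul (q : Hq) : jProj (qi * q) = qi * jProj q := by
  ext <;> simp [Quaternion.re_mul, Quaternion.imI_mul, Quaternion.imJ_mul, Quaternion.imK_mul]

def flipFst : (ℝ × ℝ) ≃ᵐ (ℝ × ℝ) := (MeasurableEquiv.neg ℝ).prodCongr (MeasurableEquiv.refl ℝ)

theorem flipFst_apply (x : ℝ × ℝ) : flipFst x = (-x.1, x.2) := rfl

theorem measurePreserving_flipFst : MeasurePreserving flipFst volume volume := by
  rw [Measure.volume_eq_prod]
  exact (Measure.measurePreserving_neg volume).prod (MeasurePreserving.id volume)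

theorem betaT_apply_eq (f : ℝ × ℝ → Hq) (x : ℝ × ℝ) :
    betaT f x = cplxProj (f x) + jProj (f (flipFst x)) := by
  ext <;> simp [betaT, flipFst_apply]

theorem betaT_qi_mul (f : ℝ × ℝ → Hq) (x : ℝ × ℝ) :
    betaT (fun y => qi * f y) x = qi * betaT f x := by
  simp only [betaT_apply_eq, cplxProj_qi_mul, jProj_qi_mul, mul_add]

section Beta

variable {f g : ℝ × ℝ → Hq}

theorem memLp_betaT (hf : MemLp f 2 volume) : MemLp (betaT f) 2 volume := by
  have hfσ : MemLp (f ∘ flipFst) 2 volume := hf.comp_measurePreserving measurePreserving_flipFst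
  rw [funext (betaT_apply_eq f)]
  exact (cplxProj.comp_memLp' hf).add (jProj.comp_memLp' hfσ)

theorem integral_inner_betaT (hf : MemLp f 2 volume) (hg : MemLp g 2 volume) :
    ∫ x, ⟪betaT f x, betaT g x⟫ = ∫ x, ⟪f x, g x⟫ := by
  have hu := (cplxProj.comp_memLp' hf).integrable_inner (𝕜 := ℝ) (cplxProj.comp_memLp' hg)
  have hv := (jProj.comp_memLp' hf).integrable_inner (𝕜 := ℝ) (jProj.comp_memLp' hg)
  calc ∫ x, ⟪betaT f x, betaT g x⟫
      = ∫ x, ⟪cplxProj (f x), cplxProj (g x)⟫ +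
          ⟪jProj (f (flipFst x)), jProj (g (flipFst x))⟫ := by
        simp only [betaT_apply_eq, inner_cplxProj_add_jProj]
    _ = ∫ x, ⟪cplxProj (f x), cplxProj (g x)⟫ + ⟪jProj (f x), jProj (g x)⟫ :=
        measurePreserving_flipFst.integral_add_comp hu hv
    _ = ∫ x, ⟪f x, g x⟫ := by
        simp only [← inner_cplxProj_add_jProj, cplxProj_add_jProj]

theorem eLpNorm_betaT (hf : MemLp f 2 volume) :
    eLpNorm (betaT f) 2 volume = eLpNorm f 2 volume := by
  rw [(memLp_betaT hf).eLpNorm_eq_integral_rpow_norm two_ne_zero ENNReal.ofNat_ne_top,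
    hf.eLpNorm_eq_integral_rpow_norm two_ne_zero ENNReal.ofNat_ne_top]
  simp only [ENNReal.toReal_ofNat, Real.rpow_two, ← real_inner_self_eq_norm_sq,
    integral_inner_betaT hf hf]

theorem re_integral_betaT_mul_star (hf : MemLp f 2 volume) (hg : MemLp g 2 volume) :
    (∫ x, betaT f x * star (betaT g x)).re = (∫ x, f x * star (g x)).re := by
  rw [Quaternion.re_integral_mul_star (memLp_betaT hf) (memLp_betaT hg),
    Quaternion.re_integral_mul_star hf hg, integral_inner_betaT hf hg]

end Beta

theorem stmt10 (f g : ℝ × ℝ → Hq) (hf : MemLp f 2 volume) (hg : MemLp g 2 volume) :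
    (∫ x : ℝ × ℝ, betaT f x * star (betaT g x)).re = (∫ x : ℝ × ℝ, f x * star (g x)).re ∧
    (qi * ∫ x : ℝ × ℝ, betaT f x * star (betaT g x)).re =
      (qi * ∫ x : ℝ × ℝ, f x * star (g x)).re ∧
    eLpNorm (betaT f) 2 volume = eLpNorm f 2 volume := by
  refine ⟨re_integral_betaT_mul_star hf hg, ?_, eLpNorm_betaT hf⟩
  rw [Quaternion.const_mul_integral_mul_star (memLp_betaT hf) (memLp_betaT hg),
    Quaternion.const_mul_integral_mul_star hf hg]
  simp only [← betaT_qi_mul]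
  exact re_integral_betaT_mul_star (hf.const_mul qi) hg
end
end
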